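/- Let M = Σ_{i=0}^k ξ_i·D^i be a differential operator with coefficients ξ_i ∈ 𝓕. Then for all a, b ∈ 𝓕: [M(a), M(b)] = M( b_*(M(a)) − a_*(M(b)) ) + Σ_{i=0}^k ( D^i(b)·(ξ_i)_*(M(a)) − D^i(a)·(ξ_i)_*(M(b)) ). -/

import Mathlib

open MvPolynomial

noncomputable section

/-- Variables of the ring 𝓕 = K[x, u₀, u₁, u₂, …]. -/
inductive FVar : Type
  | x : FVar
  | u : ℕ → FVar
  deriving DecidableEq

/-- The ring 𝓕. -/
abbrev Fc (K : Type*) [CommSemiring K] : Type _ := MvPolynomial FVar K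

variable {K : Type*} [Field K] [CharZero K]

/-- `D` is the total derivative with respect to x: the K-derivation with
D(x) = 1 and D(uᵢ) = u_{i+1}. -/
structure IsTotalDer (D : Derivation K (Fc K) (Fc K)) : Prop where
  hDx : D (X FVar.x) = 1
  hDu : ∀ i : ℕ, D (X (FVar.u i)) = X (FVar.u (i + 1))

/-- The Fréchet derivative a_* = Σ_{i≥0} (∂a/∂uᵢ)·D^i applied to `g`. -/
def frechet (D : Derivation K (Fc K) (Fc K)) (a g : Fc K) : Fc K :=
  ∑ᶠ i : ℕ, pderiv (FVar.u i) a * (⇑D)^[i] g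

/-- The Lie bracket [f, g] = g_*(f) − f_*(g). -/
def lieBracket (D : Derivation K (Fc K) (Fc K)) (f g : Fc K) : Fc K :=
  frechet D g f - frechet D f g

/-!
The Fréchet derivative `a_*` obeys the Leibniz rule in `a`, and since `D` is the total derivative
it commutes with `D`: `(D a)_* = D ∘ a_*` (check on the generators `x`, `uᵢ`, then propagate by the
Leibniz rules of both). Hence `(M p)_*(q) = M(p_*(q)) + Σᵢ Dⁱ(p)·(ξᵢ)_*(q)`, and the identity is the
difference of this formula for `(p, q) = (b, M a)` and `(a, M b)`.
-/

section

variable (D : Derivation K (Fc K) (Fc K))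

omit [CharZero K]

lemma hasFiniteSupport_pderiv_u_mul (a : Fc K) (h : ℕ → Fc K) :
    Function.HasFiniteSupport fun i => pderiv (FVar.u i) a * h i := by
  refine Function.HasFiniteSupport.mul_left ?_ h
  have hu : Function.Injective FVar.u := fun _ _ => FVar.u.inj
  refine (a.vars.finite_toSet.preimage hu.injOn).subset fun i hi => ?_
  by_contra hvar
  exact hi (pderiv_eq_zero_of_notMem_vars hvar)

lemma frechet_add (a b g : Fc K) :
    frechet D (a + b) g = frechet D a g + frechet D b g := by
  simp only [frechet, map_add, add_mul]
  exact finsum_add_distrib (hasFiniteSupport_pderiv_u_mul a _) (hasFiniteSupport_pderiv_u_mul b _)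

lemma frechet_sum {ι : Type*} (s : Finset ι) (f : ι → Fc K) (g : Fc K) :
    frechet D (∑ i ∈ s, f i) g = ∑ i ∈ s, frechet D (f i) g :=
  map_sum (AddMonoidHom.mk' (frechet D · g) (frechet_add D · · g)) f s

lemma frechet_mul (a b g : Fc K) :
    frechet D (a * b) g = a * frechet D b g + b * frechet D a g := by
  simp only [frechet, mul_finsum]
  rw [← finsum_add_distrib]
  · exact finsum_congr fun i => by rw [pderiv_mul]; ring
  · exact (hasFiniteSupport_pderiv_u_mul b _).subset (Function.support_mul_subset_right _ _)
  · exact (hasFiniteSupport_pderiv_u_mul a _).subset (Function.support_mul_subset_right _ _)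

lemma frechet_X_u (j : ℕ) (g : Fc K) : frechet D (X (FVar.u j)) g = (⇑D)^[j] g := by
  rw [frechet, finsum_eq_single _ j]
  · rw [pderiv_X_self, one_mul]
  · intro i hij
    rw [pderiv_X_of_ne (fun h => hij (FVar.u.inj h).symm), zero_mul]

lemma frechet_derivation_X (hD : IsTotalDer D) (v : FVar) (g : Fc K) :
    frechet D (D (X v)) g = D (frechet D (X v) g) := by
  cases v with
  | x => simp [hD.hDx, frechet]
  | u n => rw [hD.hDu, frechet_X_u, frechet_X_u, Function.iterate_succ_apply']

lemma frechet_derivation (hD : IsTotalDer D) (a g : Fc K) :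
    frechet D (D a) g = D (frechet D a g) := by
  induction a using MvPolynomial.induction_on with
  | C c => simp [derivation_C, frechet]
  | add p q hp hq => rw [map_add, frechet_add, frechet_add, hp, hq, map_add]
  | mul_X p v hp =>
    simp only [Derivation.leibniz, smul_eq_mul, frechet_add, frechet_mul, map_add, hp,
      frechet_derivation_X D hD]
    ring

lemma frechet_iterate_derivation (hD : IsTotalDer D) (i : ℕ) (a g : Fc K) :
    frechet D ((⇑D)^[i] a) g = (⇑D)^[i] (frechet D a g) := by
  induction i with
  | zero => rfl
  | succ n ih =>
    rw [Function.iterate_succ_apply', Function.iterate_succ_apply', frechet_derivation D hD, ih]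

lemma frechet_sum_mul_iterate (hD : IsTotalDer D) (s : Finset ℕ) (ξ : ℕ → Fc K) (p q : Fc K) :
    frechet D (∑ i ∈ s, ξ i * (⇑D)^[i] p) q =
      ∑ i ∈ s, ξ i * (⇑D)^[i] (frechet D p q) + ∑ i ∈ s, (⇑D)^[i] p * frechet D (ξ i) q := by
  simp only [frechet_sum, frechet_mul, frechet_iterate_derivation D hD, Finset.sum_add_distrib]

end

/-- for any differential operator M = Σ_{i=0}^k ξ_i·D^i,
[M(a), M(b)] = M(b_*(M(a)) − a_*(M(b)))
  + Σ_{i=0}^k ( D^i(b)·(ξ_i)_*(M(a)) − D^i(a)·(ξ_i)_*(M(b)) ). -/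
theorem statement13
    (D : Derivation K (Fc K) (Fc K)) (hD : IsTotalDer D)
    (k : ℕ) (ξ : ℕ → Fc K)
    (M : Fc K → Fc K) (hM : ∀ a, M a = ∑ i ∈ Finset.range (k + 1), ξ i * (⇑D)^[i] a) :
    ∀ a b : Fc K,
      lieBracket D (M a) (M b) =
        M (frechet D b (M a) - frechet D a (M b))
          + ∑ i ∈ Finset.range (k + 1),
              ((⇑D)^[i] b * frechet D (ξ i) (M a) - (⇑D)^[i] a * frechet D (ξ i) (M b)) := by
  intro a b
  simp only [lieBracket, hM, frechet_sum_mul_iterate D hD, iterate_map_sub, mul_sub,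
    Finset.sum_sub_distrib]
  abel
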